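/- Let 0 < r < 1 and let A_r = {z ∈ ℂ : r < |z| < 1} be the annulus. Then for every z ∈ A_r, the squeezing function of A_r satisfies s_{A_r}(z) ≥ tanh(artanh|z| − artanh r). In particular s_{A_r}(z) → 1 as |z| → 1. -/

import Mathlib

/-!
The disc automorphism `φ_p z = (z - p) / (1 - p̄ z)` maps the annulus `A_r` injectively into the
unit disc with `φ_p p = 0`. By the pseudo-hyperbolic triangle inequality
`|φ_p u| ≥ (|p| - |u|) / (1 - |p| |u|)`, it maps the closed disc of radius `r` outside the disc of
radius `(|p| - r) / (1 - |p| r) = tanh (artanh |p| - artanh r)`, so that disc lies in `φ_p A_r`.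
-/

open Metric

/-- The squeezing function of a bounded planar domain `D ⊆ ℂ` at a point `p ∈ D`:
the supremum of all `r > 0` such that some injective holomorphic map `f : D → Δ`
with `f p = 0` satisfies `Δ_r ⊆ f '' D`. -/
noncomputable def squeezingFn (D : Set ℂ) (p : ℂ) : ℝ :=
  sSup { r : ℝ | ∃ f : ℂ → ℂ,
    DifferentiableOn ℂ f D ∧ Set.InjOn f D ∧ f '' D ⊆ ball (0 : ℂ) 1 ∧ f p = 0 ∧
    0 < r ∧ ball (0 : ℂ) r ⊆ f '' D }

/-- Inverse hyperbolic tangent: `artanh x = (1/2) log((1+x)/(1-x))`. -/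
noncomputable def artanh (x : ℝ) : ℝ := Real.log ((1 + x) / (1 - x)) / 2

open ComplexConjugate Filter Topology

namespace Real

theorem tanh_sub (x y : ℝ) : tanh (x - y) = (tanh x - tanh y) / (1 - tanh x * tanh y) := by
  have hx := (cosh_pos x).ne'
  have hy := (cosh_pos y).ne'
  have hxy : cosh x * cosh y - sinh x * sinh y ≠ 0 := by
    rw [← cosh_sub]; exact (cosh_pos _).ne'
  rw [tanh_eq_sinh_div_cosh, tanh_eq_sinh_div_cosh, tanh_eq_sinh_div_cosh, sinh_sub, cosh_sub]
  field_simp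

end Real

lemma artanh_eq_real_artanh {x : ℝ} (hx : x ∈ Set.Icc (-1) 1) : artanh x = Real.artanh x := by
  rw [Real.artanh_eq_half_log hx, artanh]; ring

lemma tanh_artanh_sub_artanh {t r : ℝ} (ht : t ∈ Set.Ioo (-1) 1) (hr : r ∈ Set.Ioo (-1) 1) :
    Real.tanh (artanh t - artanh r) = (t - r) / (1 - t * r) := by
  rw [artanh_eq_real_artanh (Set.Ioo_subset_Icc_self ht),
    artanh_eq_real_artanh (Set.Ioo_subset_Icc_self hr), Real.tanh_sub, Real.tanh_artanh ht,
    Real.tanh_artanh hr]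

noncomputable def moebius (a z : ℂ) : ℂ := (z - a) / (1 - conj a * z)

section Moebius

variable {a z : ℂ}

lemma sq_norm_one_sub_conj_mul (a z : ℂ) :
    ‖1 - conj a * z‖ ^ 2 = ‖z - a‖ ^ 2 + (1 - ‖a‖ ^ 2) * (1 - ‖z‖ ^ 2) := by
  simp only [← Complex.normSq_eq_norm_sq, Complex.normSq_apply, Complex.sub_re, Complex.sub_im,
    Complex.mul_re, Complex.mul_im, Complex.one_re, Complex.one_im, Complex.conj_re,
    Complex.conj_im]
  ring

lemma one_sub_conj_mul_ne_zero (ha : ‖a‖ < 1) (hz : ‖z‖ ≤ 1) : 1 - conj a * z ≠ 0 := by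
  refine sub_ne_zero.mpr fun h => ?_
  have : ‖conj a * z‖ < 1 := by
    rw [norm_mul, Complex.norm_conj]
    nlinarith [norm_nonneg a, norm_nonneg z]
  simp [← h] at this

lemma norm_moebius_lt_one (ha : ‖a‖ < 1) (hz : ‖z‖ < 1) : ‖moebius a z‖ < 1 := by
  have hK := norm_pos_iff.mpr (one_sub_conj_mul_ne_zero ha hz.le)
  rw [moebius, norm_div, div_lt_one hK, ← sq_lt_sq₀ (norm_nonneg _) hK.le,
    sq_norm_one_sub_conj_mul]
  have : 0 < (1 - ‖a‖ ^ 2) * (1 - ‖z‖ ^ 2) := by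
    apply mul_pos <;> nlinarith [norm_nonneg a, norm_nonneg z]
  linarith

@[simp]
lemma moebius_self (a : ℂ) : moebius a a = 0 := by simp [moebius]

lemma moebius_neg_moebius (ha : ‖a‖ < 1) (hz : ‖z‖ < 1) : moebius (-a) (moebius a z) = z := by
  have hK := one_sub_conj_mul_ne_zero ha hz.le
  have haa : 1 - conj a * a ≠ 0 := one_sub_conj_mul_ne_zero ha ha.le
  have hnum : (z - a) / (1 - conj a * z) - -a = z * (1 - conj a * a) / (1 - conj a * z) := by
    rw [eq_div_iff hK, sub_mul, div_mul_cancel₀ _ hK]; ring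
  have hden : 1 - -conj a * ((z - a) / (1 - conj a * z)) =
      (1 - conj a * a) / (1 - conj a * z) := by
    rw [eq_div_iff hK, sub_mul, mul_assoc, div_mul_cancel₀ _ hK]; ring
  rw [moebius, moebius, map_neg, hnum, hden, div_div_div_cancel_right₀ hK, mul_div_assoc,
    div_self haa, mul_one]

lemma differentiableOn_moebius (ha : ‖a‖ < 1) : DifferentiableOn ℂ (moebius a) (ball 0 1) := by
  intro z hz
  have hz : ‖z‖ < 1 := by simpa using hz
  exact ((differentiableAt_id.sub_const a).div ((differentiableAt_const _).sub
    (differentiableAt_id.const_mul _)) (one_sub_conj_mul_ne_zero ha hz.le)).differentiableWithinAt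

/-- The pseudo-hyperbolic triangle inequality. -/
lemma div_one_sub_mul_le_norm_moebius (ha : ‖a‖ < 1) (hz : ‖z‖ < 1) :
    (‖a‖ - ‖z‖) / (1 - ‖a‖ * ‖z‖) ≤ ‖moebius a z‖ := by
  have hK := norm_pos_iff.mpr (one_sub_conj_mul_ne_zero ha hz.le)
  have hts : 0 < 1 - ‖a‖ * ‖z‖ := by nlinarith [norm_nonneg a, norm_nonneg z]
  rcases le_or_gt ‖a‖ ‖z‖ with hle | hlt
  · exact (div_nonpos_of_nonpos_of_nonneg (by linarith) hts.le).trans (norm_nonneg _)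
  rw [moebius, norm_div, div_le_div_iff₀ hts hK]
  have hm : ‖a‖ - ‖z‖ ≤ ‖z - a‖ := by rw [norm_sub_rev]; exact norm_sub_norm_le a z
  have hw : 0 ≤ (1 - ‖a‖ ^ 2) * (1 - ‖z‖ ^ 2) := by
    apply mul_nonneg <;> nlinarith [norm_nonneg a, norm_nonneg z]
  have hsq : (‖a‖ - ‖z‖) ^ 2 ≤ ‖z - a‖ ^ 2 := pow_le_pow_left₀ (by linarith) hm 2
  rw [← pow_le_pow_iff_left₀ (by positivity) (by positivity) two_ne_zero, mul_pow, mul_pow,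
    sq_norm_one_sub_conj_mul]
  nlinarith [mul_le_mul_of_nonneg_left hsq hw]

end Moebius

def annulus (r : ℝ) : Set ℂ := {z : ℂ | r < ‖z‖ ∧ ‖z‖ < 1}

lemma le_squeezingFn {D : Set ℂ} {p : ℂ} {f : ℂ → ℂ} {ρ : ℝ} (hf : DifferentiableOn ℂ f D)
    (hinj : Set.InjOn f D) (hmaps : f '' D ⊆ ball 0 1) (hp : f p = 0) (hρ : 0 < ρ)
    (hball : ball 0 ρ ⊆ f '' D) : ρ ≤ squeezingFn D p := by
  refine le_csSup ⟨1, ?_⟩ ⟨f, hf, hinj, hmaps, hp, hρ, hball⟩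
  rintro x ⟨g, -, -, hg, -, hx, hgx⟩
  by_contra! h
  have hmem : ((1 : ℝ) : ℂ) ∈ ball (0 : ℂ) x := by simpa using h
  simpa using hg (hgx hmem)

lemma sub_div_one_sub_mul_le_sub_div_one_sub_mul {t r s : ℝ} (ht : |t| ≤ 1) (hs : 0 ≤ s)
    (hsr : s ≤ r) (hr : r < 1) : (t - r) / (1 - t * r) ≤ (t - s) / (1 - t * s) := by
  have ht' := abs_le.mp ht
  rw [div_le_div_iff₀ (by nlinarith) (by nlinarith)]
  nlinarith [mul_nonneg (sub_nonneg.mpr hsr) (sub_nonneg.mpr ((sq_le_one_iff_abs_le_one t).mpr ht))]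

lemma ball_subset_moebius_image_annulus {r : ℝ} (hr₀ : -1 ≤ r) (hr₁ : r < 1) {p : ℂ}
    (hp : ‖p‖ < 1) :
    ball 0 ((‖p‖ - r) / (1 - ‖p‖ * r)) ⊆ moebius p '' annulus r := by
  intro w hw
  rw [mem_ball_zero_iff] at hw
  have hρ1 : (‖p‖ - r) / (1 - ‖p‖ * r) ≤ 1 := by
    rw [div_le_one (by nlinarith [norm_nonneg p])]
    nlinarith [norm_nonneg p]
  have hw1 : ‖w‖ < 1 := hw.trans_le hρ1
  have hp' : ‖-p‖ < 1 := by rwa [norm_neg]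
  have hu1 := norm_moebius_lt_one hp' hw1
  have hwu : moebius p (moebius (-p) w) = w := by simpa using moebius_neg_moebius hp' hw1
  refine ⟨moebius (-p) w, ⟨?_, hu1⟩, hwu⟩
  by_contra! hur
  have hlower := div_one_sub_mul_le_norm_moebius hp hu1
  rw [hwu] at hlower
  have hmono := sub_div_one_sub_mul_le_sub_div_one_sub_mul
    (abs_le.mpr ⟨by linarith [norm_nonneg p], hp.le⟩) (norm_nonneg _) hur hr₁
  linarith

lemma sub_div_one_sub_mul_le_squeezingFn_annulus {r : ℝ} (hr₀ : -1 ≤ r) (hr₁ : r < 1) {p : ℂ}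
    (hp : p ∈ annulus r) : (‖p‖ - r) / (1 - ‖p‖ * r) ≤ squeezingFn (annulus r) p := by
  have hD : annulus r ⊆ ball 0 1 := fun z hz => mem_ball_zero_iff.mpr hz.2
  refine le_squeezingFn ((differentiableOn_moebius hp.2).mono hD) ?_ ?_ (moebius_self p) ?_
    (ball_subset_moebius_image_annulus hr₀ hr₁ hp.2)
  · exact Set.LeftInvOn.injOn (f₁' := moebius (-p)) fun z hz => moebius_neg_moebius hp.2 hz.2
  · rintro _ ⟨z, hz, rfl⟩
    exact mem_ball_zero_iff.mpr (norm_moebius_lt_one hp.2 hz.2)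
  · exact div_pos (by linarith [hp.1])
      (by nlinarith [hp.2, mul_nonneg (norm_nonneg p) (sub_nonneg.mpr hr₁.le)])

lemma tendsto_sub_div_one_sub_mul_nhdsLT_one {r : ℝ} (hr : r ≠ 1) :
    Tendsto (fun t : ℝ => (t - r) / (1 - t * r)) (𝓝[<] 1) (𝓝 1) := by
  have hr' : 1 - r ≠ 0 := sub_ne_zero.mpr hr.symm
  have h : Tendsto (fun t : ℝ => (t - r) / (1 - t * r)) (𝓝 1) (𝓝 ((1 - r) / (1 - 1 * r))) :=
    (tendsto_id.sub_const r).div (tendsto_const_nhds.sub (tendsto_id.mul_const r))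
      (by rwa [one_mul])
  rw [one_mul, div_self hr'] at h
  exact tendsto_nhdsWithin_of_tendsto_nhds h

/-- For the annulus `A_r = {r < |z| < 1}` (with `0 < r < 1`) one has
`s_{A_r}(z) ≥ tanh(artanh|z| - artanh r)` for every `z ∈ A_r`; in particular
`s_{A_r}(z) → 1` as `|z| → 1`. -/
theorem stmt_11 (r : ℝ) (hr0 : 0 < r) (hr1 : r < 1) :
    (∀ z ∈ {z : ℂ | r < ‖z‖ ∧ ‖z‖ < 1},
      Real.tanh (artanh (‖z‖) - artanh r) ≤
        squeezingFn {z : ℂ | r < ‖z‖ ∧ ‖z‖ < 1} z) ∧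
    (∀ ε > 0, ∃ t, t < 1 ∧
      ∀ z ∈ {z : ℂ | r < ‖z‖ ∧ ‖z‖ < 1}, t < ‖z‖ →
        1 - ε < squeezingFn {z : ℂ | r < ‖z‖ ∧ ‖z‖ < 1} z) := by
  have hbound := fun z (hz : z ∈ annulus r) =>
    sub_div_one_sub_mul_le_squeezingFn_annulus (by linarith) hr1 hz
  refine ⟨fun z hz => ?_, fun ε hε => ?_⟩
  · rw [tanh_artanh_sub_artanh ⟨by linarith [hz.1], hz.2⟩ ⟨by linarith, hr1⟩]
    exact hbound z hz
  · have hev := (tendsto_sub_div_one_sub_mul_nhdsLT_one hr1.ne).eventually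
      (lt_mem_nhds (show 1 - ε < 1 by linarith))
    obtain ⟨t, ht, hsub⟩ := mem_nhdsLT_iff_exists_Ioo_subset.mp hev
    exact ⟨t, ht, fun z hz htz => (hsub ⟨htz, hz.2⟩).trans_le (hbound z hz)⟩
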